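/- Let n ≥ 2 and let A : [0,∞) → [0,∞) be a strictly increasing continuous bijection with ∫₀¹ A⁻¹(τ)/τ^((n+1)/n) dτ < ∞; define A_*⁻¹(s) = ∫₀^s A⁻¹(τ)/τ^((n+1)/n) dτ and assume A_*⁻¹(s) → +∞ as s → +∞, so that A_* is defined as the inverse of A_*⁻¹ on [0,∞). Suppose there exists a strictly increasing differentiable bijection 𝔄 : [0,∞) → [0,∞) such that A(α·t) ≥ 𝔄(α)·A(t) for all α ≥ 0 and t ≥ 0. Then for every μ > 0, A_*( μ^(1 − 1/n) ) ≥ μ · A_*( μ / 𝔄⁻¹(μ) ). -/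

import Mathlib

/-!
Substituting `τ = μσ` in the integral defining `A_*⁻¹` and using `A⁻¹(μσ) ≤ 𝔄⁻¹(μ) A⁻¹(σ)`, the
inverse form of `𝔄(α) A(t) ≤ A(αt)`, gives `A_*⁻¹(μt) ≤ μ^(1 - (n+1)/n) 𝔄⁻¹(μ) A_*⁻¹(t)`. At
`t = A_*(μ / 𝔄⁻¹(μ))` the right-hand side is `μ^(1 - 1/n)`, and `A_*` is increasing.
-/

open Set Filter MeasureTheory Topology

theorem StrictMonoOn.strictMonoOn_of_rightInvOn {α β : Type*} [LinearOrder α] [Preorder β]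
    {f : α → β} {g : β → α} {s : Set α} {t : Set β} (hf : StrictMonoOn f s) (hg : MapsTo g t s)
    (hfg : RightInvOn g f t) : StrictMonoOn g t := fun a ha b hb hab =>
  (hf.lt_iff_lt (hg ha) (hg hb)).1 (by rwa [hfg ha, hfg hb])

theorem MonotoneOn.apply_eq_of_surjOn_Ici {α : Type*} [PartialOrder α] {f : α → α} {a : α}
    (hf : MonotoneOn f (Ici a)) (hmaps : MapsTo f (Ici a) (Ici a))
    (hsurj : SurjOn f (Ici a) (Ici a)) : f a = a := by
  obtain ⟨b, hb, hfb⟩ := hsurj (self_mem_Ici : a ∈ Ici a)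
  exact le_antisymm (hfb ▸ hf self_mem_Ici hb hb) (hmaps self_mem_Ici)

theorem StrictMonoOn.pos_of_invOn_Ici {f g : ℝ → ℝ} (hf : StrictMonoOn f (Ici 0))
    (hbij : BijOn f (Ici 0) (Ici 0)) (hinv : InvOn g f (Ici 0) (Ici 0)) {x : ℝ} (hx : 0 < x) :
    0 < g x := by
  have hg_bij : BijOn g (Ici 0) (Ici 0) := hbij.symm hinv.symm
  have hg : StrictMonoOn g (Ici 0) := hf.strictMonoOn_of_rightInvOn hg_bij.mapsTo hinv.2
  simpa only [hg.monotoneOn.apply_eq_of_surjOn_Ici hg_bij.mapsTo hg_bij.surjOn] using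
    hg self_mem_Ici hx.le hx

theorem Set.InvOn.apply_mul_le_of_mul_apply_le {A Ainv : ℝ → ℝ} (hbij : BijOn A (Ici 0) (Ici 0))
    (hinv : InvOn Ainv A (Ici 0) (Ici 0)) (hmono : MonotoneOn Ainv (Ici 0)) {α c : ℝ}
    (hα : 0 ≤ α) (hc : 0 ≤ c) (hlow : ∀ t ≥ 0, c * A t ≤ A (α * t)) {s : ℝ} (hs : 0 ≤ s) :
    Ainv (c * s) ≤ α * Ainv s := by
  have hAinv_s : 0 ≤ Ainv s := (hbij.symm hinv.symm).mapsTo hs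
  have hαs : 0 ≤ α * Ainv s := mul_nonneg hα hAinv_s
  have h := hlow _ hAinv_s
  rw [hinv.2 hs] at h
  simpa only [hinv.1 hαs] using hmono (mul_nonneg hc hs : 0 ≤ c * s) (hbij.mapsTo hαs) h

theorem ContinuousOn.mapsTo_Ici_of_leftInvOn {α β : Type*} [ConditionallyCompleteLinearOrder α]
    [TopologicalSpace α] [OrderTopology α] [DenselyOrdered α] [LinearOrder β]
    [TopologicalSpace β] [OrderClosedTopology β] {F : α → β} {G : β → α} {a : α}
    (hF : ContinuousOn F (Ici a)) (htop : Tendsto F atTop atTop) (hG : LeftInvOn G F (Ici a)) :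
    MapsTo G (Ici (F a)) (Ici a) :=
  hG.mapsTo (intermediate_value_Ici hF htop)

theorem continuousOn_integral_Ioc {E : Type*} [NormedAddCommGroup E] [NormedSpace ℝ E]
    {f : ℝ → E} {a : ℝ} (hf : ∀ b, IntegrableOn f (Ioc a b)) :
    ContinuousOn (fun s => ∫ τ in Ioc a s, f τ) (Ici a) := by
  intro x hx
  have hIcc : Icc a (x + 1) ∈ 𝓝[Ici a] x := by
    rw [← Ici_inter_Iic]
    exact inter_mem_nhdsWithin _ (Iic_mem_nhds (by linarith))
  exact ((intervalIntegral.continuousOn_primitive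
    ((integrableOn_Icc_iff_integrableOn_Ioc).2 (hf _))) x ⟨hx, by linarith⟩).mono_of_mem_nhdsWithin
    hIcc

theorem monotone_integral_Ioc {f : ℝ → ℝ} {a : ℝ} (hf_nonneg : ∀ τ > a, 0 ≤ f τ)
    (hf : ∀ b, IntegrableOn f (Ioc a b)) : Monotone fun s => ∫ τ in Ioc a s, f τ :=
  fun _ t hst => setIntegral_mono_set (hf t)
    (ae_restrict_of_forall_mem measurableSet_Ioc fun τ hτ => hf_nonneg τ hτ.1)
    (Ioc_subset_Ioc_right hst).eventuallyLE

theorem strictMonoOn_of_eqOn_integral_Ioc {f F G : ℝ → ℝ} {a : ℝ} (hf_nonneg : ∀ τ > a, 0 ≤ f τ)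
    (hf : ∀ b, IntegrableOn f (Ioc a b)) (hF : EqOn (fun s => ∫ τ in Ioc a s, f τ) F (Ici a))
    (hG : LeftInvOn G F (Ici a)) : StrictMonoOn F (Ici a) :=
  (((monotone_integral_Ioc hf_nonneg hf).monotoneOn _).congr hF).strictMonoOn_of_injOn hG.injOn

theorem mapsTo_Ici_of_eqOn_integral_Ioc {f F G : ℝ → ℝ} {a : ℝ}
    (hf : ∀ b, IntegrableOn f (Ioc a b)) (hF : EqOn (fun s => ∫ τ in Ioc a s, f τ) F (Ici a))
    (htop : Tendsto F atTop atTop) (hG : LeftInvOn G F (Ici a)) : MapsTo G (Ici 0) (Ici a) := by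
  have hFa : F a = 0 := by simp [← hF (self_mem_Ici : a ∈ Ici a)]
  simpa only [hFa] using
    ((continuousOn_integral_Ioc hf).congr hF.symm).mapsTo_Ici_of_leftInvOn htop hG

theorem integrableOn_Ioc_div_rpow {g : ℝ → ℝ} {p : ℝ} (hg : MonotoneOn g (Ici 1))
    (h_one : IntegrableOn (fun τ => g τ / τ ^ p) (Ioc 0 1)) (s : ℝ) :
    IntegrableOn (fun τ => g τ / τ ^ p) (Ioc 0 s) := by
  rcases le_or_gt s 1 with hs | hs
  · exact h_one.mono_set (Ioc_subset_Ioc_right hs)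
  rw [← Ioc_union_Ioc_eq_Ioc zero_le_one hs.le]
  refine h_one.union (IntegrableOn.mono_set ?_ Ioc_subset_Icc_self)
  have hinv : ContinuousOn (fun τ : ℝ => (τ ^ p)⁻¹) (Icc 1 s) := fun τ hτ => by
    have : 0 < τ := zero_lt_one.trans_le hτ.1
    exact (Real.continuousAt_rpow_const τ p (Or.inl this.ne')).continuousWithinAt.inv₀
      (by positivity)
  simpa only [div_eq_mul_inv] using
    ((hg.mono Icc_subset_Ici_self).integrableOn_isCompact isCompact_Icc).mul_continuousOn hinv
      isCompact_Icc

theorem integral_Ioc_div_rpow_comp_mul_le {g : ℝ → ℝ} {p μ c t : ℝ} (hμ : 0 < μ) (ht : 0 ≤ t)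
    (h_μt : IntegrableOn (fun τ => g τ / τ ^ p) (Ioc 0 (μ * t)))
    (h_t : IntegrableOn (fun τ => g τ / τ ^ p) (Ioc 0 t))
    (hg : ∀ σ ∈ Ioc 0 t, g (μ * σ) ≤ c * g σ) :
    ∫ τ in Ioc 0 (μ * t), g τ / τ ^ p ≤ μ ^ (1 - p) * c * ∫ τ in Ioc 0 t, g τ / τ ^ p := by
  set f : ℝ → ℝ := fun τ => g τ / τ ^ p
  have hμt : 0 ≤ μ * t := by positivity
  have hsubst : ∫ τ in Ioc 0 (μ * t), f τ = μ * ∫ σ in Ioc 0 t, f (μ * σ) := by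
    rw [← intervalIntegral.integral_of_le hμt, ← intervalIntegral.integral_of_le ht]
    rw [intervalIntegral.integral_comp_mul_left _ hμ.ne', mul_zero, smul_eq_mul,
      mul_inv_cancel_left₀ hμ.ne']
  have h_comp : IntegrableOn (fun σ => f (μ * σ)) (Ioc 0 t) := by
    rw [← intervalIntegrable_iff_integrableOn_Ioc_of_le hμt] at h_μt
    rw [← intervalIntegrable_iff_integrableOn_Ioc_of_le ht]
    simpa [hμ.ne'] using h_μt.comp_mul_left (c := μ)
  have hpoint : ∀ σ ∈ Ioc 0 t, f (μ * σ) ≤ μ ^ (-p) * c * f σ := fun σ hσt => by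
    have hσ : 0 < σ := hσt.1
    have hrhs : μ ^ (-p) * c * f σ = c * g σ / (μ * σ) ^ p := by
      simp only [f, Real.mul_rpow hμ.le hσ.le, Real.rpow_neg hμ.le]
      field_simp
    rw [hrhs]
    exact div_le_div_of_nonneg_right (hg σ hσt) (by positivity)
  calc ∫ τ in Ioc 0 (μ * t), f τ = μ * ∫ σ in Ioc 0 t, f (μ * σ) := hsubst
    _ ≤ μ * ∫ σ in Ioc 0 t, μ ^ (-p) * c * f σ := mul_le_mul_of_nonneg_left
      (setIntegral_mono_on h_comp (h_t.const_mul _) measurableSet_Ioc hpoint) hμ.le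
    _ = μ ^ (1 - p) * c * ∫ σ in Ioc 0 t, f σ := by
      rw [integral_const_mul, sub_eq_neg_add, Real.rpow_add_one hμ.ne']
      ring

theorem stmt_9_general (n : ℕ) (hn : 2 ≤ n) (A Ainv AstarInv Astar : ℝ → ℝ)
    -- `A` is a strictly increasing continuous bijection of `[0,∞)` onto itself
    (hAmono : StrictMonoOn A (Set.Ici 0))
    (hAbij : Set.BijOn A (Set.Ici 0) (Set.Ici 0))
    (hAinv : ∀ t ≥ (0:ℝ), Ainv (A t) = t ∧ A (Ainv t) = t)
    -- `∫₀¹ A⁻¹(τ)/τ^((n+1)/n) dτ < ∞`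
    (hint : IntegrableOn (fun τ => Ainv τ / τ ^ ((n + 1 : ℝ) / n)) (Set.Ioc 0 1))
    -- `A_*⁻¹(s) = ∫₀^s A⁻¹(τ)/τ^((n+1)/n) dτ`
    (hAstarInv : ∀ s ≥ (0:ℝ),
      AstarInv s = ∫ τ in Set.Ioc (0:ℝ) s, Ainv τ / τ ^ ((n + 1 : ℝ) / n))
    (hAstarInfty : Tendsto AstarInv atTop atTop)
    -- `A_*` is the inverse of `A_*⁻¹` on `[0,∞)`
    (hAstar : ∀ s ≥ (0:ℝ), Astar (AstarInv s) = s ∧ AstarInv (Astar s) = s)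
    -- `𝔄` is a strictly increasing differentiable bijection of `[0,∞)`
    (𝔄 𝔄inv : ℝ → ℝ)
    (h𝔄mono : StrictMonoOn 𝔄 (Set.Ici 0))
    (h𝔄bij : Set.BijOn 𝔄 (Set.Ici 0) (Set.Ici 0))
    (h𝔄inv : ∀ α ≥ (0:ℝ), 𝔄inv (𝔄 α) = α ∧ 𝔄 (𝔄inv α) = α)
    (hlow : ∀ α ≥ (0:ℝ), ∀ t ≥ (0:ℝ), 𝔄 α * A t ≤ A (α * t)) :
    ∀ μ > (0:ℝ), μ * Astar (μ / 𝔄inv μ) ≤ Astar (μ ^ (1 - (1:ℝ) / n)) := by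
  intro μ hμ
  set p : ℝ := (n + 1 : ℝ) / n
  set f : ℝ → ℝ := fun τ => Ainv τ / τ ^ p
  have hA : InvOn Ainv A (Ici 0) (Ici 0) := ⟨fun t ht => (hAinv t ht).1, fun t ht => (hAinv t ht).2⟩
  have h𝔄 : InvOn 𝔄inv 𝔄 (Ici 0) (Ici 0) := ⟨fun t ht => (h𝔄inv t ht).1, fun t ht => (h𝔄inv t ht).2⟩
  have hAinv_maps : MapsTo Ainv (Ici 0) (Ici 0) := (hAbij.symm hA.symm).mapsTo
  have hAinv_mono : MonotoneOn Ainv (Ici 0) :=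
    (hAmono.strictMonoOn_of_rightInvOn hAinv_maps hA.2).monotoneOn
  have hf_int : ∀ s, IntegrableOn f (Ioc 0 s) :=
    integrableOn_Ioc_div_rpow (hAinv_mono.mono (Ici_subset_Ici.2 zero_le_one)) hint
  have hF_eq : EqOn (fun s => ∫ τ in Ioc 0 s, f τ) AstarInv (Ici 0) :=
    fun s hs => (hAstarInv s hs).symm
  have hAstar_left : LeftInvOn Astar AstarInv (Ici 0) := fun s hs => (hAstar s hs).1
  have hF_mono : StrictMonoOn AstarInv (Ici 0) := strictMonoOn_of_eqOn_integral_Ioc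
    (fun τ hτ => div_nonneg (hAinv_maps hτ.le) (by positivity)) hf_int hF_eq hAstar_left
  have hAstar_maps : MapsTo Astar (Ici 0) (Ici 0) :=
    mapsTo_Ici_of_eqOn_integral_Ioc hf_int hF_eq hAstarInfty hAstar_left
  have hc : 0 < 𝔄inv μ := h𝔄mono.pos_of_invOn_Ici h𝔄bij h𝔄 hμ
  set t₀ := Astar (μ / 𝔄inv μ)
  have ht₀ : 0 ≤ t₀ := hAstar_maps (div_pos hμ hc).le
  have hscale : AstarInv (μ * t₀) ≤ μ ^ (1 - (1:ℝ) / n) := by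
    calc AstarInv (μ * t₀) = ∫ τ in Ioc 0 (μ * t₀), f τ := hAstarInv _ (by positivity)
      _ ≤ μ ^ (1 - p) * 𝔄inv μ * ∫ τ in Ioc 0 t₀, f τ :=
        integral_Ioc_div_rpow_comp_mul_le hμ ht₀ (hf_int _) (hf_int _) fun σ hσ =>
          hA.apply_mul_le_of_mul_apply_le hAbij hAinv_mono hc.le hμ.le
            (by simpa only [(h𝔄inv μ hμ.le).2] using hlow _ hc.le) hσ.1.le
      _ = μ ^ (1 - p) * 𝔄inv μ * (μ / 𝔄inv μ) := by
        rw [← hAstarInv t₀ ht₀, (hAstar _ (div_pos hμ hc).le).2]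
      _ = μ ^ (1 - (1:ℝ) / n) := by
        have hn0 : (n : ℝ) ≠ 0 := Nat.cast_ne_zero.2 (by omega)
        rw [mul_assoc, mul_div_cancel₀ _ hc.ne', ← Real.rpow_add_one hμ.ne']
        congr 1
        simp only [p]
        field_simp
        ring
  have hb : 0 ≤ μ ^ (1 - (1:ℝ) / n) := by positivity
  exact (hF_mono.le_iff_le (mul_nonneg hμ.le ht₀) (hAstar_maps hb)).1
    (by rwa [(hAstar _ hb).2])

theorem stmt_9 (n : ℕ) (hn : 2 ≤ n) (A Ainv AstarInv Astar : ℝ → ℝ)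
    -- `A` is a strictly increasing continuous bijection of `[0,∞)` onto itself
    (hAmono : StrictMonoOn A (Set.Ici 0))
    (hAcont : ContinuousOn A (Set.Ici 0))
    (hAbij : Set.BijOn A (Set.Ici 0) (Set.Ici 0))
    (hAinv : ∀ t ≥ (0:ℝ), Ainv (A t) = t ∧ A (Ainv t) = t)
    -- `∫₀¹ A⁻¹(τ)/τ^((n+1)/n) dτ < ∞`
    (hint : IntegrableOn (fun τ => Ainv τ / τ ^ ((n + 1 : ℝ) / n)) (Set.Ioc 0 1))
    -- `A_*⁻¹(s) = ∫₀^s A⁻¹(τ)/τ^((n+1)/n) dτ`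
    (hAstarInv : ∀ s ≥ (0:ℝ),
      AstarInv s = ∫ τ in Set.Ioc (0:ℝ) s, Ainv τ / τ ^ ((n + 1 : ℝ) / n))
    (hAstarInfty : Tendsto AstarInv atTop atTop)
    -- `A_*` is the inverse of `A_*⁻¹` on `[0,∞)`
    (hAstar : ∀ s ≥ (0:ℝ), Astar (AstarInv s) = s ∧ AstarInv (Astar s) = s)
    -- `𝔄` is a strictly increasing differentiable bijection of `[0,∞)`
    (𝔄 𝔄inv : ℝ → ℝ)
    (h𝔄mono : StrictMonoOn 𝔄 (Set.Ici 0))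
    (h𝔄diff : DifferentiableOn ℝ 𝔄 (Set.Ici 0))
    (h𝔄bij : Set.BijOn 𝔄 (Set.Ici 0) (Set.Ici 0))
    (h𝔄inv : ∀ α ≥ (0:ℝ), 𝔄inv (𝔄 α) = α ∧ 𝔄 (𝔄inv α) = α)
    (hlow : ∀ α ≥ (0:ℝ), ∀ t ≥ (0:ℝ), 𝔄 α * A t ≤ A (α * t)) :
    ∀ μ > (0:ℝ), μ * Astar (μ / 𝔄inv μ) ≤ Astar (μ ^ (1 - (1:ℝ) / n)) :=
  stmt_9_general n hn A Ainv AstarInv Astar hAmono hAbij hAinv hint hAstarInv hAstarInfty hAstar 𝔄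
    𝔄inv h𝔄mono h𝔄bij h𝔄inv hlow
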